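/- Let n ≥ 2 and let S be a set of n−1 ordered pairs (i,j) with i ≠ j of indices in {1,…,n} whose undirected graph Γ_S on {1,…,n} is a tree, and let D_S = Σ_{s∈S} d_s. Let i ≠ j and suppose v_0 = i, v_1, …, v_k = j is a walk from i to j, meaning that for each t either (v_t, v_{t+1}) ∈ S or (v_{t+1}, v_t) ∈ S. Let m be the number of indices t with (v_t, v_{t+1}) ∈ S minus the number of indices t with (v_{t+1}, v_t) ∈ S (the weight of the walk). Then [D_S, e_{ij}] = m · e_{ij}; that is, e_{ij} is an eigenvector of ad D_S with eigenvalue m. -/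

import Mathlib

open scoped Classical in
/-- The undirected graph `Γ_S` on `Fin n` associated to a set `S` of ordered
pairs: there is an edge `{i, j}` for each `(i, j) ∈ S`. -/
noncomputable def gammaGraph {n : ℕ} (S : Finset (Fin n × Fin n)) :
    SimpleGraph (Fin n) :=
  SimpleGraph.fromRel (fun a b => (a, b) ∈ S)

/-- `ε k = e_{kk} - (1/n) • I`. -/
noncomputable def epsMat (n : ℕ) (k : Fin n) : Matrix (Fin n) (Fin n) ℂ :=
  Matrix.single k k 1 - ((n : ℂ)⁻¹) • 1

open scoped Classical in
/-- For `s = (i, j) ∈ S`, `d_s = Σ_{k ∈ C(s)} ε_k` where `C(s)` is the set of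
vertices which remain connected to `i` in `Γ_S` after removing the edge `{i, j}`. -/
noncomputable def dMat {n : ℕ} (S : Finset (Fin n × Fin n))
    (s : Fin n × Fin n) : Matrix (Fin n) (Fin n) ℂ :=
  ∑ k : Fin n,
    if ((gammaGraph S).deleteEdges {s(s.1, s.2)}).Reachable k s.1 then
      epsMat n k else 0

/-- `D_S = Σ_{s ∈ S} d_s`. -/
noncomputable def DMat {n : ℕ} (S : Finset (Fin n × Fin n)) :
    Matrix (Fin n) (Fin n) ℂ :=
  ∑ s ∈ S, dMat S s



open scoped Classical in
lemma conn_card_le {V : Type*} [Fintype V] {G : SimpleGraph V}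
    (h : G.Connected) : Fintype.card V ≤ G.edgeFinset.card + 1 := by
  obtain ⟨r⟩ := h.nonempty
  choose p hp using fun w => h.exists_walk_length_eq_dist w r
  have hdist : ∀ w : V, w ≠ r → G.dist ((p w).getVert 1) r < G.dist w r := by
    intro w hw
    have hnil : ¬ (p w).Nil := SimpleGraph.Walk.not_nil_of_ne hw
    have h1 : (p w).tail.length + 1 = (p w).length :=
      SimpleGraph.Walk.length_tail_add_one hnil
    have h2 := SimpleGraph.dist_le (p w).tail
    have h3 := hp w
    have h2' : G.dist ((p w).getVert 1) r ≤ (p w).tail.length := h2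
    omega
  have hmem : ∀ w ∈ ({r}ᶜ : Finset V), s(w, (p w).getVert 1) ∈ G.edgeFinset := by
    intro w hw
    rw [Finset.mem_compl, Finset.mem_singleton] at hw
    have hnil : ¬ (p w).Nil := SimpleGraph.Walk.not_nil_of_ne hw
    rw [SimpleGraph.mem_edgeFinset, SimpleGraph.mem_edgeSet]
    exact (p w).adj_snd hnil
  have hinj : ∀ a ∈ ({r}ᶜ : Finset V), ∀ b ∈ ({r}ᶜ : Finset V),
      s(a, (p a).getVert 1) = s(b, (p b).getVert 1) → a = b := by
    intro a ha b hb hab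
    rw [Finset.mem_compl, Finset.mem_singleton] at ha hb
    rw [Sym2.eq_iff] at hab
    rcases hab with ⟨h1, _⟩ | ⟨h1, h2⟩
    · exact h1
    · exfalso
      have d1 := hdist a ha
      have d2 := hdist b hb
      rw [h2] at d1
      rw [← h1] at d2
      omega
  have hcard := Finset.card_le_card_of_injOn _ hmem hinj
  have : ({r}ᶜ : Finset V).card = Fintype.card V - 1 := by
    rw [Finset.card_compl, Finset.card_singleton]
  have hpos : 0 < Fintype.card V := Fintype.card_pos_iff.mpr ⟨r⟩
  omega

open scoped Classical in
lemma gamma_edgeFinset_subset {n : ℕ} (S : Finset (Fin n × Fin n)) :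
    (gammaGraph S).edgeFinset ⊆ S.image (fun p => s(p.1, p.2)) := by
  intro e he
  induction e using Sym2.ind with
  | _ x y =>
    rw [SimpleGraph.mem_edgeFinset, SimpleGraph.mem_edgeSet, gammaGraph,
      SimpleGraph.fromRel_adj] at he
    obtain ⟨hne, h | h⟩ := he
    · exact Finset.mem_image.mpr ⟨(x, y), h, rfl⟩
    · exact Finset.mem_image.mpr ⟨(y, x), h, Sym2.eq_swap⟩

open scoped Classical in
lemma bridge_lemma {n : ℕ} (hn : 2 ≤ n) (S : Finset (Fin n × Fin n))
    (hcard : S.card = n - 1) (hconn : (gammaGraph S).Connected)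
    (c d : Fin n) (hadj : (gammaGraph S).Adj c d) :
    ¬ ((gammaGraph S).deleteEdges {s(c, d)}).Reachable c d := by
  intro hreach
  set G := gammaGraph S with hG
  set G' := G.deleteEdges {s(c, d)} with hG'
  have hstep : ∀ x y : Fin n, G.Adj x y → G'.Reachable x y := by
    intro x y hxy
    by_cases hxy' : s(x, y) = s(c, d)
    · rw [Sym2.eq_iff] at hxy'
      rcases hxy' with ⟨rfl, rfl⟩ | ⟨rfl, rfl⟩
      · exact hreach
      · exact hreach.symm
    · exact (SimpleGraph.deleteEdges_adj.mpr ⟨hxy, by simpa using hxy'⟩).reachable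
  have hpre : G'.Preconnected := by
    intro x y
    obtain ⟨w⟩ := hconn.preconnected x y
    induction w with
    | nil => exact SimpleGraph.Reachable.refl _
    | cons h p ih => exact (hstep _ _ h).trans ih
  haveI : Nonempty (Fin n) := hconn.nonempty
  have hconn' : G'.Connected := ⟨hpre⟩
  have hsub : G'.edgeFinset ⊆ G.edgeFinset.erase s(c, d) := by
    intro e he
    rw [SimpleGraph.mem_edgeFinset, SimpleGraph.edgeSet_deleteEdges] at he
    rw [Finset.mem_erase, SimpleGraph.mem_edgeFinset]
    exact ⟨by simpa using he.2, he.1⟩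
  have h1 : G'.edgeFinset.card ≤ G.edgeFinset.card - 1 := by
    have := Finset.card_le_card hsub
    have hc : s(c, d) ∈ G.edgeFinset := SimpleGraph.mem_edgeFinset.mpr hadj
    have := Finset.card_erase_of_mem hc
    omega
  have h2 : G.edgeFinset.card ≤ n - 1 := by
    calc G.edgeFinset.card ≤ (S.image (fun p => s(p.1, p.2))).card :=
          Finset.card_le_card (gamma_edgeFinset_subset S)
      _ ≤ S.card := Finset.card_image_le
      _ = n - 1 := hcard
  have h3 := conn_card_le hconn'
  have h4 : G.edgeFinset.card ≥ 1 := by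
    have hc : s(c, d) ∈ G.edgeFinset := SimpleGraph.mem_edgeFinset.mpr hadj
    exact Finset.card_pos.mpr ⟨_, hc⟩
  rw [Fintype.card_fin] at h3
  have h3' : n ≤ G'.edgeFinset.card + 1 := by convert h3
  omega

lemma bracket_diag {n : ℕ} (D : Matrix (Fin n) (Fin n) ℂ)
    (hD : ∀ p q : Fin n, p ≠ q → D p q = 0) (i j : Fin n) :
    ⁅D, Matrix.single i j (1 : ℂ)⁆ =
      (D i i - D j j) • Matrix.single i j (1 : ℂ) := by
  ext p q
  rw [Ring.lie_def, Matrix.sub_apply, Matrix.smul_apply, Matrix.mul_apply, Matrix.mul_apply]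
  simp only [Matrix.single, Matrix.of_apply, mul_ite, ite_mul, mul_one, mul_zero,
    one_mul, zero_mul, smul_eq_mul, ite_and, Finset.sum_ite_eq, Finset.sum_ite_eq',
    Finset.mem_univ, if_true]
  by_cases hp : i = p <;> by_cases hq : j = q <;>
    simp [hp, hq]
  · exact hD j q (fun h => hq h)
  · exact hD p i (fun h => hp h.symm)

open scoped Classical in
lemma eps_sum_apply {n : ℕ} (P : Fin n → Prop) [DecidablePred P] (p q : Fin n) :
    (∑ k : Fin n, if P k then epsMat n k else 0) p q
      = if p = q then ((if P p then (1 : ℂ) else 0)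
          - ∑ k : Fin n, (if P k then (n : ℂ)⁻¹ else 0)) else 0 := by
  rw [Matrix.sum_apply]
  by_cases hpq : p = q
  · subst hpq
    rw [if_pos rfl]
    have hterm : ∀ k : Fin n, (if P k then epsMat n k else 0) p p
        = (if k = p then (if P k then (1 : ℂ) else 0) else 0)
          - (if P k then (n : ℂ)⁻¹ else 0) := by
      intro k
      by_cases h2 : k = p
      · subst h2
        by_cases h : P k <;>
          simp [h, epsMat, Matrix.sub_apply, Matrix.smul_apply, Matrix.one_apply,
            Matrix.single, Matrix.of_apply]
      · by_cases h : P k <;>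
          simp [h, h2, epsMat, Matrix.sub_apply, Matrix.smul_apply, Matrix.one_apply,
            Matrix.single, Matrix.of_apply]
    rw [Finset.sum_congr rfl (fun k _ => hterm k), Finset.sum_sub_distrib,
      Finset.sum_ite_eq' Finset.univ p (fun k => if P k then (1 : ℂ) else 0)]
    simp
  · rw [if_neg hpq]
    refine Finset.sum_eq_zero fun k _ => ?_
    by_cases h : P k <;>
      simp [h, epsMat, Matrix.sub_apply, Matrix.smul_apply, Matrix.one_apply, hpq,
        Matrix.single, Matrix.of_apply, fun h' : k = p => hpq]
    intro h1 h2
    exact absurd (h1.symm.trans h2) hpq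

open scoped Classical in
lemma dMat_apply {n : ℕ} (S : Finset (Fin n × Fin n)) (s : Fin n × Fin n) (p q : Fin n) :
    dMat S s p q = if p = q then
      ((if ((gammaGraph S).deleteEdges {s(s.1, s.2)}).Reachable p s.1 then (1 : ℂ) else 0)
        - ∑ l : Fin n, (if ((gammaGraph S).deleteEdges {s(s.1, s.2)}).Reachable l s.1
            then (n : ℂ)⁻¹ else 0)) else 0 := by
  rw [dMat]
  exact eps_sum_apply (fun l => ((gammaGraph S).deleteEdges {s(s.1, s.2)}).Reachable l s.1) p q

open scoped Classical in
/-- **`e_{ij}` is an eigenvector of `ad D_S` with eigenvalue the weight of a walk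
from `i` to `j`.**  Let `n ≥ 2` and let `S` be a set of `n - 1` ordered pairs
whose undirected graph `Γ_S` is a tree.  If `v 0 = i, v 1, …, v k = j` is a walk
from `i` to `j` (each step traverses an edge of `S`, forwards or backwards), and
`m` is the number of steps traversed forwards minus the number traversed
backwards (the weight of the walk), then `⁅D_S, e_{ij}⁆ = m • e_{ij}`. -/
theorem DMat_bracket_eq_weight_smul
    (n : ℕ) (hn : 2 ≤ n) (S : Finset (Fin n × Fin n))
    (hne : ∀ p ∈ S, p.1 ≠ p.2)
    (hcard : S.card = n - 1)
    (hconn : (gammaGraph S).Connected)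
    (i j : Fin n) (hij : i ≠ j)
    (k : ℕ) (v : ℕ → Fin n) (hv0 : v 0 = i) (hvk : v k = j)
    (hstep : ∀ t < k, (v t, v (t + 1)) ∈ S ∨ (v (t + 1), v t) ∈ S)
    (m : ℤ)
    (hm : m = (∑ t ∈ Finset.range k, if (v t, v (t + 1)) ∈ S then (1 : ℤ) else 0)
            - (∑ t ∈ Finset.range k, if (v (t + 1), v t) ∈ S then (1 : ℤ) else 0)) :
    ⁅DMat S, Matrix.single i j (1 : ℂ)⁆ =
      (m : ℂ) • Matrix.single i j (1 : ℂ) := by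
  -- χ s p is the indicator that p is connected to s.1 after deleting the edge of s
  set χ : (Fin n × Fin n) → Fin n → ℂ := fun s p =>
    if ((gammaGraph S).deleteEdges {s(s.1, s.2)}).Reachable p s.1 then 1 else 0 with hχ
  -- DMat is diagonal
  have happly : ∀ p q : Fin n, DMat S p q
      = if p = q then (∑ s ∈ S, (χ s p
          - ∑ l : Fin n, (if ((gammaGraph S).deleteEdges {s(s.1, s.2)}).Reachable l s.1
              then (n : ℂ)⁻¹ else 0))) else 0 := by
    intro p q
    rw [DMat, Matrix.sum_apply]
    rw [Finset.sum_congr rfl (fun s _ => dMat_apply S s p q)]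
    by_cases hpq : p = q <;> simp [hpq, hχ]
  have hoff : ∀ p q : Fin n, p ≠ q → DMat S p q = 0 := by
    intro p q h; rw [happly, if_neg h]
  rw [bracket_diag _ hoff]
  have hdiff : DMat S i i - DMat S j j = ∑ s ∈ S, (χ s i - χ s j) := by
    rw [happly i i, happly j j, if_pos rfl, if_pos rfl, ← Finset.sum_sub_distrib]
    exact Finset.sum_congr rfl fun s _ => by ring
  -- the per-step lemma
  have hstep' : ∀ t, t < k → ∀ s ∈ S,
      χ s (v t) - χ s (v (t + 1))
        = (if (v t, v (t + 1)) = s then (1 : ℂ) else 0)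
          - (if (v (t + 1), v t) = s then (1 : ℂ) else 0) := by
    intro t ht s hsS
    set a := v t with ha
    set b := v (t + 1) with hb
    have hADJ : (gammaGraph S).Adj a b := by
      rw [gammaGraph, SimpleGraph.fromRel_adj]
      rcases hstep t ht with h | h
      · exact ⟨hne _ h, Or.inl h⟩
      · exact ⟨(hne _ h).symm, Or.inr h⟩
    have hs12 : s.1 ≠ s.2 := hne s hsS
    have hsadj : (gammaGraph S).Adj s.1 s.2 := by
      rw [gammaGraph, SimpleGraph.fromRel_adj]
      exact ⟨hs12, Or.inl (by simpa using hsS)⟩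
    by_cases hcase : s(a, b) = s(s.1, s.2)
    · rw [Sym2.eq_iff] at hcase
      have hbr := bridge_lemma hn S hcard hconn s.1 s.2 hsadj
      rcases hcase with ⟨h1, h2⟩ | ⟨h1, h2⟩
      · -- a = s.1, b = s.2  : forward crossing
        have hχa : χ s a = 1 := by
          rw [hχ]; simp only [h1]
          rw [if_pos (SimpleGraph.Reachable.refl _)]
        have hχb : χ s b = 0 := by
          rw [hχ]; simp only
          rw [if_neg]
          intro hr
          exact hbr (h2 ▸ hr).symm
        have hif1 : (a, b) = s := by rw [Prod.ext_iff]; exact ⟨h1, h2⟩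
        have hif2 : (b, a) ≠ s := by
          intro h
          rw [Prod.ext_iff] at h
          exact hs12 (h1 ▸ h.2 ▸ rfl : s.1 = s.2)
        rw [hχa, hχb, if_pos hif1, if_neg hif2]
      · -- a = s.2, b = s.1 : backward crossing
        have hχb : χ s b = 1 := by
          rw [hχ]; simp only [h2]
          rw [if_pos (SimpleGraph.Reachable.refl _)]
        have hχa : χ s a = 0 := by
          rw [hχ]; simp only
          rw [if_neg]
          intro hr
          exact hbr (h1 ▸ hr).symm
        have hif2 : (b, a) = s := by rw [Prod.ext_iff]; exact ⟨h2, h1⟩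
        have hif1 : (a, b) ≠ s := by
          intro h
          rw [Prod.ext_iff] at h
          exact hs12 (h.1 ▸ h1 ▸ rfl : s.1 = s.2)
        rw [hχa, hχb, if_pos hif2, if_neg hif1]
    · -- the step edge is different from s : no crossing
      have hadj' : ((gammaGraph S).deleteEdges {s(s.1, s.2)}).Adj a b :=
        SimpleGraph.deleteEdges_adj.mpr ⟨hADJ, by simpa using hcase⟩
      have hiff : ((gammaGraph S).deleteEdges {s(s.1, s.2)}).Reachable a s.1
          ↔ ((gammaGraph S).deleteEdges {s(s.1, s.2)}).Reachable b s.1 :=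
        ⟨fun h => hadj'.symm.reachable.trans h, fun h => hadj'.reachable.trans h⟩
      have hif1 : (a, b) ≠ s := by
        intro h
        exact hcase (by rw [← h])
      have hif2 : (b, a) ≠ s := by
        intro h
        apply hcase
        rw [← h, Sym2.eq_swap]
      rw [hχ]
      simp only [if_neg hif1, if_neg hif2]
      by_cases h : ((gammaGraph S).deleteEdges {s(s.1, s.2)}).Reachable a s.1
      · rw [if_pos h, if_pos (hiff.mp h)]; ring
      · rw [if_neg h, if_neg (fun h' => h (hiff.mpr h'))]
  -- telescoping
  have htel : ∀ s ∈ S, χ s i - χ s j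
      = ∑ t ∈ Finset.range k, (χ s (v t) - χ s (v (t + 1))) := by
    intro s _
    rw [Finset.sum_range_sub' (fun t => χ s (v t))]
    rw [hv0, hvk]
  have hkey : DMat S i i - DMat S j j = (m : ℂ) := by
    rw [hdiff]
    rw [Finset.sum_congr rfl htel]
    rw [Finset.sum_congr rfl (fun s hs =>
      Finset.sum_congr rfl (fun t ht => hstep' t (Finset.mem_range.mp ht) s hs))]
    rw [Finset.sum_comm]
    have hinner : ∀ t ∈ Finset.range k,
        (∑ s ∈ S, ((if (v t, v (t + 1)) = s then (1 : ℂ) else 0)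
          - (if (v (t + 1), v t) = s then (1 : ℂ) else 0)))
        = (if (v t, v (t + 1)) ∈ S then (1 : ℂ) else 0)
          - (if (v (t + 1), v t) ∈ S then (1 : ℂ) else 0) := by
      intro t _
      rw [Finset.sum_sub_distrib]
      rw [Finset.sum_ite_eq S (v t, v (t + 1)) (fun _ => (1 : ℂ)),
        Finset.sum_ite_eq S (v (t + 1), v t) (fun _ => (1 : ℂ))]
    rw [Finset.sum_congr rfl hinner]
    rw [hm]
    push_cast
    rw [Finset.sum_sub_distrib]
  rw [hkey]
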